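/- Let Ω ⊂ ℝ^d be bounded with Poincaré constant C_p(Ω), i.e., ‖q̃‖_{L^2} ≤ C_p(Ω) |q̃|_{H^1} for all q̃ ∈ H^1(Ω) with zero mean. Then for any W > 0 and any q ∈ L^2(Ω) with zero mean, ‖q‖_{L^2} ≤ √2 · max{1, C_p(Ω)/W} · ‖q‖_{L^2+W H^1}, where ‖q‖_{L^2+W H^1} = inf_{q̃ ∈ H^1∩L^2_0} sqrt(‖q−q̃‖_{L^2}^2 + W^2 |q̃|_{H^1}^2). -/

import Mathlib

open MeasureTheory ENNReal

/-! The comparison `‖q‖ ≤ ‖q - q̃‖ + ‖q̃‖ ≤ ‖q - q̃‖ + C_p |q̃|_{H¹}` holds for every admissible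
`q̃`; rescaling by `max 1 (C_p / W)` and the inequality `a + b ≤ √2 √(a² + b²)` bound the right
side by the quantity inside the infimum defining the sum norm. -/

/-- Membership in `H¹(Ω)`. -/
def H1on (d : ℕ) (Ω : Set (EuclideanSpace ℝ (Fin d)))
    (f : EuclideanSpace ℝ (Fin d) → ℝ) : Prop :=
  Differentiable ℝ f ∧ MemLp f 2 (volume.restrict Ω) ∧
    MemLp (fun x => ‖fderiv ℝ f x‖) 2 (volume.restrict Ω)

/-- The sum norm `‖q‖_{L² + W H¹}` with the infimum taken over `q̃ ∈ H¹(Ω) ∩ L²₀(Ω)`. -/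
noncomputable def sumNorm0 (d : ℕ) (Ω : Set (EuclideanSpace ℝ (Fin d))) (W : ℝ)
    (q : EuclideanSpace ℝ (Fin d) → ℝ) : ℝ :=
  sInf { r : ℝ | ∃ f, H1on d Ω f ∧ (∫ x in Ω, f x) = 0 ∧
    r = Real.sqrt ((∫ x in Ω, (q x - f x) ^ 2) + W ^ 2 * ∫ x in Ω, ‖fderiv ℝ f x‖ ^ 2) }

lemma add_le_sqrt_two_mul_sqrt_sq_add_sq {a b : ℝ} (ha : 0 ≤ a) (hb : 0 ≤ b) :
    a + b ≤ √2 * √(a ^ 2 + b ^ 2) := by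
  rw [← Real.sqrt_mul zero_le_two, Real.le_sqrt (by positivity) (by positivity)]
  exact add_sq_le

lemma add_mul_le_sqrt_two_mul_max_mul_sqrt {A B C W : ℝ} (hA : 0 ≤ A) (hB : 0 ≤ B) (hW : 0 < W) :
    A + C * B ≤ √2 * max 1 (C / W) * √(A ^ 2 + W ^ 2 * B ^ 2) := by
  have hCB : C * B ≤ max 1 (C / W) * (W * B) :=
    calc C * B = C / W * (W * B) := by field_simp
      _ ≤ max 1 (C / W) * (W * B) := by gcongr; exact le_max_right _ _
  calc A + C * B ≤ max 1 (C / W) * (A + W * B) := by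
        rw [mul_add]; gcongr; exact le_mul_of_one_le_left hA (le_max_left _ _)
    _ ≤ max 1 (C / W) * (√2 * √(A ^ 2 + (W * B) ^ 2)) := by
        gcongr; exact add_le_sqrt_two_mul_sqrt_sq_add_sq hA (by positivity)
    _ = √2 * max 1 (C / W) * √(A ^ 2 + W ^ 2 * B ^ 2) := by ring_nf

section L2

variable {α : Type*} [MeasurableSpace α] {μ : Measure α} {f g : α → ℝ}

lemma MeasureTheory.MemLp.sqrt_integral_sq_eq_toReal_eLpNorm (hf : MemLp f 2 μ) :
    √(∫ x, f x ^ 2 ∂μ) = (eLpNorm f 2 μ).toReal := by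
  rw [hf.eLpNorm_eq_integral_rpow_norm two_ne_zero ofNat_ne_top,
    toReal_ofReal (by positivity), Real.sqrt_eq_rpow]
  simp [sq_abs]

lemma sqrt_integral_add_sq_le (hf : MemLp f 2 μ) (hg : MemLp g 2 μ) :
    √(∫ x, (f x + g x) ^ 2 ∂μ) ≤ √(∫ x, f x ^ 2 ∂μ) + √(∫ x, g x ^ 2 ∂μ) := by
  rw [show (fun x => (f x + g x) ^ 2) = fun x => (f + g) x ^ 2 from rfl,
    (hf.add hg).sqrt_integral_sq_eq_toReal_eLpNorm,
    hf.sqrt_integral_sq_eq_toReal_eLpNorm, hg.sqrt_integral_sq_eq_toReal_eLpNorm,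
    ← toReal_add hf.eLpNorm_ne_top hg.eLpNorm_ne_top]
  exact toReal_mono (add_ne_top.mpr ⟨hf.eLpNorm_ne_top, hg.eLpNorm_ne_top⟩)
    (eLpNorm_add_le hf.aestronglyMeasurable hg.aestronglyMeasurable one_le_two)

lemma sqrt_integral_sq_le_of_poincare {q G : α → ℝ} {C W : ℝ} (hq : MemLp q 2 μ)
    (hf : MemLp f 2 μ) (hPoincare : √(∫ x, f x ^ 2 ∂μ) ≤ C * √(∫ x, G x ^ 2 ∂μ)) (hW : 0 < W) :
    √(∫ x, q x ^ 2 ∂μ) ≤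
      √2 * max 1 (C / W) * √((∫ x, (q x - f x) ^ 2 ∂μ) + W ^ 2 * ∫ x, G x ^ 2 ∂μ) := by
  have hA : √(∫ x, (q x - f x) ^ 2 ∂μ) ^ 2 = ∫ x, (q x - f x) ^ 2 ∂μ :=
    Real.sq_sqrt (integral_nonneg fun x => sq_nonneg _)
  have hB : √(∫ x, G x ^ 2 ∂μ) ^ 2 = ∫ x, G x ^ 2 ∂μ :=
    Real.sq_sqrt (integral_nonneg fun x => sq_nonneg _)
  calc √(∫ x, q x ^ 2 ∂μ) = √(∫ x, (q x - f x + f x) ^ 2 ∂μ) := by simp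
    _ ≤ √(∫ x, (q x - f x) ^ 2 ∂μ) + √(∫ x, f x ^ 2 ∂μ) :=
        sqrt_integral_add_sq_le (hq.sub hf) hf
    _ ≤ √(∫ x, (q x - f x) ^ 2 ∂μ) + C * √(∫ x, G x ^ 2 ∂μ) := by gcongr
    _ ≤ _ := by
        have := add_mul_le_sqrt_two_mul_max_mul_sqrt (C := C)
          (Real.sqrt_nonneg (∫ x, (q x - f x) ^ 2 ∂μ)) (Real.sqrt_nonneg (∫ x, G x ^ 2 ∂μ)) hW
        rwa [hA, hB] at this

end L2

lemma le_mul_csInf_of_forall_le_mul {s : Set ℝ} {a c : ℝ} (hc : 0 < c) (hs : s.Nonempty)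
    (h : ∀ r ∈ s, a ≤ c * r) : a ≤ c * sInf s := by
  rw [← div_le_iff₀' hc]
  exact le_csInf hs fun r hr => (div_le_iff₀' hc).mpr (h r hr)

theorem H1on.zero (d : ℕ) (Ω : Set (EuclideanSpace ℝ (Fin d))) : H1on d Ω 0 := by
  refine ⟨differentiable_const 0, MemLp.zero, ?_⟩
  simp only [fderiv_zero, Pi.zero_apply, norm_zero]
  exact (MemLp.zero : MemLp (0 : EuclideanSpace ℝ (Fin d) → ℝ) 2 (volume.restrict Ω))

theorem L2_le_sumNorm_general (d : ℕ) (Ω : Set (EuclideanSpace ℝ (Fin d)))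
    (Cp : ℝ)
    (hPoincare : ∀ f, H1on d Ω f → (∫ x in Ω, f x) = 0 →
      Real.sqrt (∫ x in Ω, (f x) ^ 2) ≤ Cp * Real.sqrt (∫ x in Ω, ‖fderiv ℝ f x‖ ^ 2))
    (W : ℝ) (hW : 0 < W)
    (q : EuclideanSpace ℝ (Fin d) → ℝ)
    (hq : MemLp q 2 (volume.restrict Ω)) :
    Real.sqrt (∫ x in Ω, (q x) ^ 2) ≤
      Real.sqrt 2 * max 1 (Cp / W) * sumNorm0 d Ω W q := by
  have hC : 0 < √2 * max 1 (Cp / W) :=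
    mul_pos (by positivity) (zero_lt_one.trans_le (le_max_left _ _))
  refine le_mul_csInf_of_forall_le_mul hC ⟨_, 0, H1on.zero d Ω, by simp, rfl⟩ ?_
  rintro r ⟨f, hf, hfmean, rfl⟩
  exact sqrt_integral_sq_le_of_poincare hq hf.2.1 (hPoincare f hf hfmean) hW

/-- If `Ω` has Poincaré constant `Cp` (for zero-mean `H¹` functions), then for any `W > 0`
and zero-mean `q ∈ L²(Ω)` we have
`‖q‖_{L²} ≤ √2 · max{1, Cp/W} · ‖q‖_{L²+W H¹}`. -/
theorem L2_le_sumNorm (d : ℕ) (Ω : Set (EuclideanSpace ℝ (Fin d)))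
    (hΩ : Bornology.IsBounded Ω) (Cp : ℝ) (hCp : 0 < Cp)
    (hPoincare : ∀ f, H1on d Ω f → (∫ x in Ω, f x) = 0 →
      Real.sqrt (∫ x in Ω, (f x) ^ 2) ≤ Cp * Real.sqrt (∫ x in Ω, ‖fderiv ℝ f x‖ ^ 2))
    (W : ℝ) (hW : 0 < W)
    (q : EuclideanSpace ℝ (Fin d) → ℝ)
    (hq : MemLp q 2 (volume.restrict Ω))
    (hmean : (∫ x in Ω, q x) = 0) :
    Real.sqrt (∫ x in Ω, (q x) ^ 2) ≤
      Real.sqrt 2 * max 1 (Cp / W) * sumNorm0 d Ω W q :=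
  L2_le_sumNorm_general d Ω Cp hPoincare W hW q hq
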